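/- Every universally Baire set of reals has the Baire property and is Lebesgue measurable; in particular any set A ⊆ ω^ω that equals p[T] = ℝ \ p[U] for a pair of trees that are absolutely complementing for all forcings of the form Col(ω,Z) has the property of Baire. -/

import Mathlib

/-!
A finite measure `μ` on `ω^ω` has a density topology: a set is open when each of its points is a
Lebesgue density point of it, densities being computed along cylinders (the cylinders form a
Vitali family because the metric of `ω^ω` is an ultrametric). It refines the product topology, so
`A` has the property of Baire for it. By the Lebesgue density theorem its open sets are
`μ`-null-measurable and its comeagre sets are `μ`-conull, hence `A` is `μ`-null-measurable.
-/

abbrev Rl := ℕ → ℕ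

/-- Feng–Magidor–Woodin: `A` is universally Baire if every continuous preimage of
`A` (in any topological space) has the property of Baire. -/
def UniversallyBaire (A : Set Rl) : Prop :=
  ∀ (Y : Type) (_ : TopologicalSpace Y) (f : Y → Rl),
    Continuous f → BaireMeasurableSet (f ⁻¹' A)

open Filter MeasureTheory Set Topology

namespace PiNat

variable {E : ℕ → Type*}

theorem cylinder_subset_or_subset_of_nonempty_inter {x y : ∀ n, E n} {m n : ℕ}
    (h : (cylinder x m ∩ cylinder y n).Nonempty) :
    cylinder x m ⊆ cylinder y n ∨ cylinder y n ⊆ cylinder x m := by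
  obtain ⟨z, hzx, hzy⟩ := h
  rw [← mem_cylinder_iff_eq.1 hzx, ← mem_cylinder_iff_eq.1 hzy]
  rcases le_total m n with hmn | hnm
  · exact Or.inr (cylinder_anti z hmn)
  · exact Or.inl (cylinder_anti z hnm)

variable {𝒞 : Set (Set (∀ n, E n))}

theorem exists_maximal_cylinder_superset (h𝒞 : ∀ c ∈ 𝒞, ∃ x n, c = cylinder x n)
    {c : Set (∀ n, E n)} (hc : c ∈ 𝒞) : ∃ d, Maximal (· ∈ 𝒞) d ∧ c ⊆ d := by
  classical
  obtain ⟨x, n, rfl⟩ := h𝒞 c hc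
  have hex : ∃ k, cylinder x k ∈ 𝒞 := ⟨n, hc⟩
  refine ⟨cylinder x (Nat.find hex), ⟨Nat.find_spec hex, fun d hd hsub => ?_⟩,
    cylinder_anti x (Nat.find_min' hex hc)⟩
  obtain ⟨y, k, rfl⟩ := h𝒞 d hd
  rw [← mem_cylinder_iff_eq.1 (hsub (self_mem_cylinder x _))] at hd ⊢
  exact cylinder_anti x (not_lt.1 fun hk => Nat.find_min hex hk hd)

theorem pairwise_disjoint_maximal_cylinder (h𝒞 : ∀ c ∈ 𝒞, ∃ x n, c = cylinder x n) :
    {c | Maximal (· ∈ 𝒞) c}.Pairwise Disjoint := by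
  intro c hc d hd hne
  rw [Set.disjoint_iff_inter_eq_empty, ← not_nonempty_iff_eq_empty]
  intro hcd
  obtain ⟨x, m, rfl⟩ := h𝒞 c hc.prop
  obtain ⟨y, n, rfl⟩ := h𝒞 d hd.prop
  rcases cylinder_subset_or_subset_of_nonempty_inter hcd with hsub | hsub
  · exact hne (hc.eq_of_subset hd.prop hsub)
  · exact hne (hd.eq_of_subset hc.prop hsub).symm

variable [∀ n, TopologicalSpace (E n)] [∀ n, DiscreteTopology (E n)]
  [MeasurableSpace (∀ n, E n)] [OpensMeasurableSpace (∀ n, E n)]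

attribute [local instance] PiNat.metricSpace

noncomputable def vitaliFamily (μ : Measure (∀ n, E n)) : VitaliFamily μ where
  setsAt x := range (cylinder x)
  measurableSet := by
    rintro x _ ⟨n, rfl⟩
    exact (isOpen_cylinder _ x n).measurableSet
  nonempty_interior := by
    rintro x _ ⟨n, rfl⟩
    exact ⟨x, by rw [(isOpen_cylinder _ x n).interior_eq]; exact self_mem_cylinder x n⟩
  nontrivial x ε hε := by
    obtain ⟨n, hn⟩ := exists_pow_lt_of_lt_one hε one_half_lt_one
    exact ⟨cylinder x n, mem_range_self n,
      fun y hy => Metric.mem_closedBall.2 ((mem_cylinder_iff_dist_le.1 hy).trans hn.le)⟩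
  covering s f hf hsmall := by
    set 𝒞 := ⋃ x ∈ s, f x
    have h𝒞 : ∀ c ∈ 𝒞, ∃ x ∈ s, c ∈ f x := by simp [𝒞]
    have hcyl : ∀ c ∈ 𝒞, ∃ x n, c = cylinder x n := fun c hc => by
      obtain ⟨x, hx, hcx⟩ := h𝒞 c hc
      obtain ⟨n, rfl⟩ := hf x hx hcx
      exact ⟨x, n, rfl⟩
    -- `s` is covered exactly by the maximal cylinders of `𝒞`, each tagged with a centre in `s`
    choose center hcenter_mem hcenter using h𝒞
    refine ⟨range fun c : {c // Maximal (· ∈ 𝒞) c} => (center c c.2.prop, c.1), ?_, ?_, ?_, ?_⟩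
    · rintro _ ⟨c, rfl⟩
      exact hcenter_mem _ _
    · rintro _ ⟨c, rfl⟩ _ ⟨d, rfl⟩ hne
      refine pairwise_disjoint_maximal_cylinder hcyl c.2 d.2 fun h => hne ?_
      obtain rfl : c = d := Subtype.ext h
      rfl
    · rintro _ ⟨c, rfl⟩
      exact hcenter _ _
    · suffices s ⊆ ⋃ c : {c // Maximal (· ∈ 𝒞) c}, c.1 by
        rw [biUnion_range, sdiff_eq_empty.2 this, measure_empty]
      intro x hx
      obtain ⟨c, hc, -⟩ := hsmall x hx 1 one_pos
      obtain ⟨d, hd, hcd⟩ := exists_maximal_cylinder_superset hcyl (mem_biUnion hx hc)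
      obtain ⟨n, rfl⟩ := hf x hx hc
      exact mem_iUnion_of_mem ⟨d, hd⟩ (hcd (self_mem_cylinder x n))

end PiNat

namespace VitaliFamily

variable {X : Type*} [PseudoMetricSpace X] [MeasurableSpace X] {μ : Measure X}
  (v : VitaliFamily μ)

/-- When `μ a = 0` along `v.filterAt x` the ratio is `0 / 0 = 0`, so such an `x` is a density
point of every set. -/
def IsDensityPoint (s : Set X) (x : X) : Prop :=
  Tendsto (fun a => μ (a \ s) / μ a) (v.filterAt x) (𝓝 0)

variable {v} {s t : Set X} {x : X}

theorem IsDensityPoint.mono_ae (hs : v.IsDensityPoint s x) (hst : s ≤ᵐ[μ] t) :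
    v.IsDensityPoint t x :=
  tendsto_of_tendsto_of_tendsto_of_le_of_le tendsto_const_nhds hs (fun _ => zero_le) fun a =>
    ENNReal.div_le_div_right (measure_mono_ae ((EventuallyLE.refl _ a).diff hst)) _

theorem IsDensityPoint.inter (hs : v.IsDensityPoint s x) (ht : v.IsDensityPoint t x) :
    v.IsDensityPoint (s ∩ t) x := by
  refine tendsto_of_tendsto_of_tendsto_of_le_of_le tendsto_const_nhds
    (by simpa using hs.add ht) (fun _ => zero_le) fun a => ?_
  rw [← ENNReal.add_div, sdiff_inter]
  exact ENNReal.div_le_div_right (measure_union_le _ _) _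

theorem isDensityPoint_of_mem_nhds (hs : s ∈ 𝓝 x) : v.IsDensityPoint s x :=
  tendsto_const_nhds.congr' <| (v.eventually_filterAt_subset_of_nhds hs).mono fun a ha => by
    simp [sdiff_eq_empty.2 ha]

abbrev densityTopology : TopologicalSpace X where
  IsOpen s := ∀ x ∈ s, v.IsDensityPoint s x
  isOpen_univ _ _ := isDensityPoint_of_mem_nhds univ_mem
  isOpen_inter _ _ hs ht x hx := (hs x hx.1).inter (ht x hx.2)
  isOpen_sUnion S hS := by
    rintro x ⟨s, hsS, hxs⟩
    exact (hS s hsS x hxs).mono_ae (subset_sUnion_of_mem hsS).eventuallyLE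

theorem densityTopology_le : v.densityTopology ≤ (inferInstance : TopologicalSpace X) :=
  fun _ hs _ hx => isDensityPoint_of_mem_nhds (hs.mem_nhds hx)

variable [SecondCountableTopology X] [BorelSpace X] [IsLocallyFiniteMeasure μ]

theorem ae_isDensityPoint (hs : MeasurableSet s) : ∀ᵐ x ∂μ, x ∈ s → v.IsDensityPoint s x := by
  filter_upwards [v.ae_tendsto_measure_inter_div_of_measurableSet hs.compl] with x hx hxs
  simpa [IsDensityPoint, sdiff_eq_compl_inter, hxs] using hx

theorem nullMeasurableSet_of_isOpen (hs : IsOpen[v.densityTopology] s) :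
    NullMeasurableSet s μ := by
  set H := toMeasurable μ sᶜ
  have hH : MeasurableSet H := measurableSet_toMeasurable μ sᶜ
  -- at a point of `s ∩ H` the density of `H` would be both `1` and `0`
  have hsH : μ (s ∩ H) = 0 := by
    rw [measure_eq_zero_iff_ae_notMem]
    filter_upwards [v.ae_tendsto_measure_inter_div_of_measurableSet hH] with x hx ⟨hxs, hxH⟩
    have h_eq : ∀ᶠ a in v.filterAt x, μ (a \ s) / μ a = μ (H ∩ a) / μ a := by
      filter_upwards [v.eventually_filterAt_measurableSet x] with a ha
      rw [Measure.measure_toMeasurable_inter_of_sFinite ha, sdiff_eq_compl_inter, inter_comm]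
    have := tendsto_nhds_unique ((hs x hxs).congr' h_eq) hx
    simp [hxH] at this
  refine hH.compl.nullMeasurableSet.congr (ae_eq_set.2 ⟨?_, by rwa [sdiff_compl]⟩)
  rw [sdiff_eq_empty.2 (compl_subset_comm.1 (subset_toMeasurable μ sᶜ)), measure_empty]

theorem measure_compl_eq_zero_of_dense_isOpen (hs : IsOpen[v.densityTopology] s)
    (hd : @Dense X v.densityTopology s) : μ sᶜ = 0 := by
  obtain ⟨K, hKs, hK, hKae⟩ :=
    (nullMeasurableSet_of_isOpen hs).compl.exists_measurable_subset_ae_eq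
  set D := {x ∈ K | v.IsDensityPoint K x}
  have hKD : μ (K \ D) = 0 := by
    rw [measure_eq_zero_iff_ae_notMem]
    filter_upwards [v.ae_isDensityPoint hK] with x hx ⟨hxK, hxD⟩
    exact hxD ⟨hxK, hx hxK⟩
  have hD : IsOpen[v.densityTopology] D := fun x hx => hx.2.mono_ae (ae_le_set.2 hKD)
  have hD_empty : D = ∅ := by
    rw [← not_nonempty_iff_eq_empty]
    intro hD_ne
    obtain ⟨x, hxD, hxs⟩ := @Dense.inter_open_nonempty X v.densityTopology s hd D hD hD_ne
    exact hKs hxD.1 hxs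
  rw [← measure_congr hKae, ← sdiff_empty (s := K), ← hD_empty, hKD]

theorem ae_le_residual_densityTopology : ae μ ≤ @residual X v.densityTopology :=
  le_countableGenerate_iff_of_countableInterFilter.2 fun _ ⟨hs, hd⟩ =>
    measure_compl_eq_zero_of_dense_isOpen hs hd

theorem nullMeasurableSet_of_baireMeasurableSet
    (hs : @BaireMeasurableSet X v.densityTopology s) : NullMeasurableSet s μ := by
  obtain ⟨u, hu, hsu⟩ := @BaireMeasurableSet.residualEq_isOpen X v.densityTopology s hs
  exact (nullMeasurableSet_of_isOpen hu).congr
    (hsu.filter_mono ae_le_residual_densityTopology).symm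

end VitaliFamily

/-- Universally Baire sets of reals have the property of Baire (in ω^ω) and are
Lebesgue measurable: they are null-measurable with respect to every (finite Borel)
measure on ω^ω. -/
theorem universallyBaire_baireProperty_and_measurable
    (A : Set Rl) (hA : UniversallyBaire A) :
    BaireMeasurableSet A ∧
      ∀ μ : MeasureTheory.Measure Rl, MeasureTheory.IsFiniteMeasure μ →
        MeasureTheory.NullMeasurableSet A μ := by
  refine ⟨hA Rl inferInstance id continuous_id, fun μ _ => ?_⟩
  let _ := PiNat.metricSpace (E := fun _ : ℕ => ℕ)
  let v := PiNat.vitaliFamily μ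
  exact v.nullMeasurableSet_of_baireMeasurableSet
    (hA Rl v.densityTopology id (continuous_id_of_le v.densityTopology_le))
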